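/- Let the infinite tridiagonal matrices M and M̄ act on bi-infinite sequences by (M y)_k = (h/6) y_{k-1} + (2h/3) y_k + (h/6) y_{k+1} and (M̄ y)_k = h y_k, and let A = M̄^{-1}(M̄ - M). Then for every bounded sequence y and every n ≥ 0, (Aⁿ y)_k = ((-1)ⁿ h^{2n}/6ⁿ)(Dⁿ y)_k, where (D y)_k = (y_{k+1} - 2y_k + y_{k-1})/h². -/
import Mathlib


/-- Consistent mass matrix of linear FEM on a uniform 1D mesh, acting on bi-infinite
sequences. -/
noncomputable def massM (h : ℝ) (y : ℤ → ℝ) : ℤ → ℝ :=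
  fun k => h/6 * y (k-1) + 2*h/3 * y k + h/6 * y (k+1)

/-- Lumped mass matrix. -/
noncomputable def massLump (h : ℝ) (y : ℤ → ℝ) : ℤ → ℝ := fun k => h * y k

/-- The Guermond–Pasquetti correction operator `A = M̄⁻¹(M̄ - M)`. -/
noncomputable def corrA (h : ℝ) (y : ℤ → ℝ) : ℤ → ℝ :=
  fun k => (massLump h y k - massM h y k) / h

/-- Centered second-difference operator. -/
noncomputable def secondDiff (h : ℝ) (y : ℤ → ℝ) : ℤ → ℝ :=
  fun k => (y (k+1) - 2 * y k + y (k-1)) / h^2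

theorem stmt_18 (h : ℝ) (hh : 0 < h) (y : ℤ → ℝ) (hbdd : ∃ C : ℝ, ∀ k : ℤ, |y k| ≤ C)
    (n : ℕ) (k : ℤ) :
    (corrA h)^[n] y k = (-1)^n * h^(2*n) / 6^n * ((secondDiff h)^[n] y k) := by
  have hne : h ≠ 0 := ne_of_gt hh
  induction n generalizing k with
  | zero => simp
  | succ n ih =>
    rw [Function.iterate_succ_apply', Function.iterate_succ_apply']
    simp only [corrA, secondDiff, massLump, massM]
    rw [ih (k-1), ih k, ih (k+1)]
    field_simp
    ring
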